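/- arXiv:1601.04184 — 4 statements merged into one kernel-verified Lean document; each statement's English description precedes it below -/
import Mathlib

section
/- Let Ω ⊆ D be an open set and fix a > 1, with E_n = {z ∈ ℂ : a^n ≤ log(1/|z|) ≤ a^{n+1}} \ Ω for n ≥ 1, and for ρ ≥ 1 let E^ρ = {z ∈ ℂ : 1 ≤ log(1/|z|) ≤ ρ} \ Ω (a compact subset of D). Then the series ∑_{n=1}^∞ a^{-n} C_h(E_n) diverges to +∞ if and only if the integral ∫_1^{+∞} C_h(E^ρ) ρ^{-2} dρ diverges to +∞. (Equivalence of conditions (5) and (6) of Theorem 1.1 for the Laplacian.) -/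
/-!
Both conditions are compared with the condensed series `∑ a⁻ⁿ C_h(E^{aⁿ})`. Since `ρ ↦ C_h(E^ρ)`
is monotone, the integral over `[aⁿ, aⁿ⁺¹)` is comparable to `a⁻ⁿ C_h(E^{aⁿ})` (Cauchy
condensation). On the other side `E_k ⊆ E^{aᵏ⁺¹}`, while `E^{aⁿ} ⊆ E_0 ∪ ⋯ ∪ E_n` and `C_h` is
finitely subadditive on Borel sets, so a Cauchy product with the geometric series bounds the
condensed series by `(1 - a⁻¹)⁻¹ ∑ a⁻ᵏ C_h(E_k)`. Finally `C_h(E_0) < ∞`, since testing the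
admissibility condition at `z = 1/2` bounds the mass of admissible measures on `{1 ≤ h ≤ a}`.
-/

open MeasureTheory Filter Set
open scoped ENNReal Topology

noncomputable section

/-- The open unit disk `Σ = {z : |z| < 1}` in `ℂ`. -/
def unitDisk : Set ℂ := {z : ℂ | ‖z‖ < 1}

/-- The punctured open unit disk `D = Σ \ {0}`. -/
def puncDisk : Set ℂ := unitDisk \ {0}

/-- `h(z) = log (1/|z|)`. -/
def hker (z : ℂ) : ℝ := Real.log (1 / ‖z‖)

/-- The Green function of the Laplacian on the unit disk,
`G(z,w) = log(|1 - z·conj w| / |z - w|)`, with value `+∞` on the diagonal. -/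
def greenFn (z w : ℂ) : ℝ≥0∞ :=
  if z = w then ⊤
  else ENNReal.ofReal (Real.log (‖1 - z * (starRingEnd ℂ) w‖ / ‖z - w‖))

/-- The `h`-potential of a measure `μ`: `z ↦ ∫ G(z,w)/h(w) dμ(w)`. -/
def hPotential (μ : Measure ℂ) (z : ℂ) : ℝ≥0∞ :=
  ∫⁻ w, greenFn z w / ENNReal.ofReal (hker w) ∂μ

/-- The `h`-capacity of a set `K`: the supremum of total masses `μ(K)` over finite Borel
measures supported in `K` whose `h`-potential is dominated by `h` on `D`. -/
def capH (K : Set ℂ) : ℝ≥0∞ :=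
  sSup { m : ℝ≥0∞ | ∃ μ : Measure ℂ, IsFiniteMeasure μ ∧ μ Kᶜ = 0 ∧
    (∀ z ∈ puncDisk, hPotential μ z ≤ ENNReal.ofReal (hker z)) ∧ m = μ K }

namespace ENNReal

theorem eq_top_iff_of_mul_le_of_le_mul {x y c C : ℝ≥0∞} (hc : c ≠ 0) (hC : C ≠ ⊤)
    (hlow : c * y ≤ x) (hup : x ≤ C * y) : x = ⊤ ↔ y = ⊤ := by
  refine ⟨fun hx => ?_, fun hy => ?_⟩
  · by_contra hy
    exact mul_ne_top hC hy (top_le_iff.1 (hx ▸ hup))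
  · rw [hy, mul_top hc] at hlow
    exact top_le_iff.1 hlow

open Finset in
theorem tsum_mul_tsum_eq_tsum_sum_antidiagonal (f g : ℕ → ℝ≥0∞) :
    (∑' n, f n) * ∑' n, g n = ∑' n, ∑ kl ∈ antidiagonal n, f kl.1 * g kl.2 := by
  simp_rw [← ENNReal.tsum_mul_right, ← ENNReal.tsum_mul_left]
  rw [← ENNReal.tsum_prod, ← HasAntidiagonal.sigmaAntidiagonalEquivProd.tsum_eq,
    ENNReal.tsum_sigma']
  exact tsum_congr fun n => tsum_subtype (antidiagonal n) fun kl => f kl.1 * g kl.2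

theorem tsum_pow_mul_sum_range (r : ℝ≥0∞) (x : ℕ → ℝ≥0∞) :
    ∑' n, r ^ n * ∑ k ∈ Finset.range (n + 1), x k = (1 - r)⁻¹ * ∑' k, r ^ k * x k := by
  rw [← tsum_geometric, mul_comm, tsum_mul_tsum_eq_tsum_sum_antidiagonal]
  refine tsum_congr fun n => ?_
  rw [Finset.Nat.sum_antidiagonal_eq_sum_range_succ_mk, Finset.mul_sum]
  refine Finset.sum_congr rfl fun k hk => ?_
  rw [mul_right_comm, ← pow_add, Nat.add_sub_cancel' (Finset.mem_range_succ_iff.1 hk), mul_comm]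

theorem tsum_pow_mul_eq_top_iff_of_le_of_le_sum_range {r : ℝ≥0∞} (hr0 : r ≠ 0) (hr1 : r < 1)
    {φ x : ℕ → ℝ≥0∞} (hx : ∀ k, x k ≤ φ (k + 1))
    (hφ : ∀ n, φ n ≤ ∑ k ∈ Finset.range (n + 1), x k) :
    ∑' n, r ^ n * φ n = ⊤ ↔ ∑' n, r ^ n * x n = ⊤ := by
  refine eq_top_iff_of_mul_le_of_le_mul hr0 (inv_ne_top.2 (tsub_pos_of_lt hr1).ne') ?_ ?_
  · calc r * ∑' n, r ^ n * x n = ∑' n, r ^ (n + 1) * x n := by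
          rw [← ENNReal.tsum_mul_left]
          simp_rw [pow_succ', mul_assoc]
      _ ≤ ∑' n, r ^ (n + 1) * φ (n + 1) := ENNReal.tsum_le_tsum fun n => by gcongr; exact hx n
      _ ≤ ∑' n, r ^ n * φ n :=
          tsum_comp_le_tsum_of_injective (add_left_injective 1) fun n => r ^ n * φ n
  · calc ∑' n, r ^ n * φ n ≤ ∑' n, r ^ n * ∑ k ∈ Finset.range (n + 1), x k :=
          ENNReal.tsum_le_tsum fun n => by gcongr; exact hφ n
      _ = _ := tsum_pow_mul_sum_range r x

theorem ofReal_rpow_neg_natCast {a : ℝ} (ha : 0 < a) (n : ℕ) :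
    ENNReal.ofReal (a ^ (-(n : ℝ))) = ENNReal.ofReal a⁻¹ ^ n := by
  rw [Real.rpow_neg ha.le, Real.rpow_natCast, ← inv_pow, ofReal_pow (inv_nonneg.2 ha.le)]

end ENNReal

theorem lintegral_Ioi_one_eq_tsum_lintegral_Ico_pow {a : ℝ} (ha : 1 < a) (f : ℝ → ℝ≥0∞) :
    ∫⁻ ρ in Ioi 1, f ρ = ∑' n : ℕ, ∫⁻ ρ in Ico (a ^ n) (a ^ (n + 1)), f ρ := by
  have hmono : Monotone fun n : ℕ => a ^ n := pow_right_mono₀ ha.le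
  have hunion : ⋃ n : ℕ, Ico (a ^ n) (a ^ (n + 1)) = Ici 1 := by
    simpa using iUnion_Ico_map_succ_eq_Ici (f := fun n : ℕ => a ^ n)
      (fun n => hmono n.zero_le)
      (not_bddAbove_of_tendsto_atTop (tendsto_pow_atTop_atTop_of_one_lt ha))
  rw [Measure.restrict_congr_set Ioi_ae_eq_Ici, ← hunion,
    lintegral_iUnion (fun n => measurableSet_Ico)
      (by simpa using hmono.pairwise_disjoint_on_Ico_succ)]

theorem setLIntegral_Ico_div_sq_le {f : ℝ → ℝ≥0∞} (hf : Monotone f) {x y : ℝ} (hx : 0 < x) :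
    ∫⁻ ρ in Ico x y, f ρ / ENNReal.ofReal (ρ ^ 2) ≤ f y * ENNReal.ofReal ((y - x) / x ^ 2) :=
  calc ∫⁻ ρ in Ico x y, f ρ / ENNReal.ofReal (ρ ^ 2)
      ≤ ∫⁻ _ in Ico x y, f y / ENNReal.ofReal (x ^ 2) :=
        setLIntegral_mono' measurableSet_Ico fun ρ hρ =>
          ENNReal.div_le_div (hf hρ.2.le) (ENNReal.ofReal_le_ofReal (by nlinarith [hρ.1]))
    _ = f y * ENNReal.ofReal ((y - x) / x ^ 2) := by
        rw [setLIntegral_const, Real.volume_Ico, ENNReal.ofReal_div_of_pos (by positivity),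
          div_eq_mul_inv, div_eq_mul_inv]
        ring

theorem le_setLIntegral_Ico_div_sq {f : ℝ → ℝ≥0∞} (hf : Monotone f) {x y : ℝ} (hx : 0 < x)
    (hxy : x ≤ y) :
    f x * ENNReal.ofReal ((y - x) / y ^ 2) ≤ ∫⁻ ρ in Ico x y, f ρ / ENNReal.ofReal (ρ ^ 2) :=
  calc f x * ENNReal.ofReal ((y - x) / y ^ 2)
      = ∫⁻ _ in Ico x y, f x / ENNReal.ofReal (y ^ 2) := by
        rw [setLIntegral_const, Real.volume_Ico,
          ENNReal.ofReal_div_of_pos (pow_pos (hx.trans_le hxy) 2), div_eq_mul_inv,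
          div_eq_mul_inv]
        ring
    _ ≤ ∫⁻ ρ in Ico x y, f ρ / ENNReal.ofReal (ρ ^ 2) :=
        setLIntegral_mono' measurableSet_Ico fun ρ hρ =>
          ENNReal.div_le_div (hf hρ.1) (ENNReal.ofReal_le_ofReal (by nlinarith [hρ.1, hρ.2]))

theorem mul_tsum_le_lintegral_Ioi_one_div_sq {f : ℝ → ℝ≥0∞} (hf : Monotone f) {a : ℝ}
    (ha : 1 < a) :
    ENNReal.ofReal ((a - 1) * a⁻¹ ^ 2) * ∑' n : ℕ, ENNReal.ofReal a⁻¹ ^ n * f (a ^ n) ≤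
      ∫⁻ ρ in Ioi 1, f ρ / ENNReal.ofReal (ρ ^ 2) := by
  have ha0 : 0 < a := one_pos.trans ha
  rw [lintegral_Ioi_one_eq_tsum_lintegral_Ico_pow ha, ← ENNReal.tsum_mul_left]
  refine ENNReal.tsum_le_tsum fun n => le_trans (le_of_eq ?_)
    (le_setLIntegral_Ico_div_sq hf (pow_pos ha0 n) (pow_le_pow_right₀ ha.le n.le_succ))
  have : (a ^ (n + 1) - a ^ n) / (a ^ (n + 1)) ^ 2 = (a - 1) * a⁻¹ ^ 2 * a⁻¹ ^ n := by
    rw [inv_pow, inv_pow]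
    field_simp
    ring
  rw [this, ENNReal.ofReal_mul (p := (a - 1) * a⁻¹ ^ 2) (by nlinarith [inv_pos.2 ha0]),
    ENNReal.ofReal_pow (by positivity)]
  ring

theorem lintegral_Ioi_one_div_sq_le_mul_tsum {f : ℝ → ℝ≥0∞} (hf : Monotone f) {a : ℝ}
    (ha : 1 < a) :
    ∫⁻ ρ in Ioi 1, f ρ / ENNReal.ofReal (ρ ^ 2) ≤
      ENNReal.ofReal ((a - 1) * a) * ∑' n : ℕ, ENNReal.ofReal a⁻¹ ^ n * f (a ^ n) := by
  have ha0 : 0 < a := one_pos.trans ha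
  set r := ENNReal.ofReal a⁻¹
  calc ∫⁻ ρ in Ioi 1, f ρ / ENNReal.ofReal (ρ ^ 2)
      ≤ ∑' n : ℕ, ENNReal.ofReal ((a - 1) * a) * (r ^ (n + 1) * f (a ^ (n + 1))) := by
        rw [lintegral_Ioi_one_eq_tsum_lintegral_Ico_pow ha]
        refine ENNReal.tsum_le_tsum fun n =>
          (setLIntegral_Ico_div_sq_le hf (pow_pos ha0 n)).trans (le_of_eq ?_)
        have : (a ^ (n + 1) - a ^ n) / (a ^ n) ^ 2 = (a - 1) * a * a⁻¹ ^ (n + 1) := by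
          rw [inv_pow]
          field_simp
          ring
        rw [this, ENNReal.ofReal_mul (p := (a - 1) * a) (by nlinarith),
          ENNReal.ofReal_pow (by positivity)]
        ring
    _ ≤ ENNReal.ofReal ((a - 1) * a) * ∑' n : ℕ, r ^ n * f (a ^ n) := by
        rw [ENNReal.tsum_mul_left]
        exact mul_le_mul' le_rfl
          (ENNReal.tsum_comp_le_tsum_of_injective (add_left_injective 1) fun n => r ^ n * f (a ^ n))

theorem lintegral_Ioi_one_div_sq_eq_top_iff {f : ℝ → ℝ≥0∞} (hf : Monotone f) {a : ℝ}
    (ha : 1 < a) :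
    ∫⁻ ρ in Ioi 1, f ρ / ENNReal.ofReal (ρ ^ 2) = ⊤ ↔
      ∑' n : ℕ, ENNReal.ofReal a⁻¹ ^ n * f (a ^ n) = ⊤ :=
  ENNReal.eq_top_iff_of_mul_le_of_le_mul
    (ENNReal.ofReal_pos.2 (mul_pos (sub_pos.2 ha) (by positivity))).ne' ENNReal.ofReal_ne_top
    (mul_tsum_le_lintegral_Ioi_one_div_sq hf ha) (lintegral_Ioi_one_div_sq_le_mul_tsum hf ha)

theorem hPotential_mono {μ ν : Measure ℂ} (h : μ ≤ ν) (z : ℂ) : hPotential μ z ≤ hPotential ν z :=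
  lintegral_mono' h le_rfl

theorem capH_mono {K K' : Set ℂ} (h : K ⊆ K') : capH K ≤ capH K' := by
  refine sSup_le ?_
  rintro _ ⟨μ, hfin, hsupp, hpot, rfl⟩
  exact (measure_mono h).trans
    (le_sSup ⟨μ, hfin, measure_mono_null (compl_subset_compl.2 h) hsupp, hpot, rfl⟩)

theorem measure_inter_le_capH {μ : Measure ℂ} [IsFiniteMeasure μ]
    (hpot : ∀ z ∈ puncDisk, hPotential μ z ≤ ENNReal.ofReal (hker z)) {K S : Set ℂ}
    (hS : MeasurableSet S) (hsupp : μ (Kᶜ ∩ S) = 0) : μ (K ∩ S) ≤ capH K :=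
  le_sSup ⟨μ.restrict S, inferInstance, by rwa [Measure.restrict_apply' hS],
    fun z hz => (hPotential_mono Measure.restrict_le_self z).trans (hpot z hz),
    (Measure.restrict_apply' hS).symm⟩

theorem capH_union_le {K₁ K₂ : Set ℂ} (h₁ : MeasurableSet K₁) :
    capH (K₁ ∪ K₂) ≤ capH K₁ + capH K₂ := by
  refine sSup_le ?_
  rintro _ ⟨μ, hfin, hsupp, hpot, rfl⟩
  calc μ (K₁ ∪ K₂) ≤ μ (K₁ ∩ K₁ ∪ K₂ ∩ K₁ᶜ) := by rw [inter_self, ← sdiff_eq, union_sdiff_self]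
    _ ≤ μ (K₁ ∩ K₁) + μ (K₂ ∩ K₁ᶜ) := measure_union_le _ _
    _ ≤ capH K₁ + capH K₂ := add_le_add
        (measure_inter_le_capH hpot h₁ (by rw [compl_inter_self, measure_empty]))
        (measure_inter_le_capH hpot h₁.compl
          (by rwa [← compl_union, union_comm]))

theorem capH_biUnion_le {ι : Type*} (s : Finset ι) {K : ι → Set ℂ}
    (hK : ∀ i ∈ s, MeasurableSet (K i)) : capH (⋃ i ∈ s, K i) ≤ ∑ i ∈ s, capH (K i) := by
  classical
  induction s using Finset.induction_on with
  | empty =>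
    refine sSup_le ?_
    rintro _ ⟨μ, -, -, -, rfl⟩
    simp
  | insert i s hi ih =>
    rw [Finset.set_biUnion_insert, Finset.sum_insert hi]
    exact (capH_union_le (hK i (Finset.mem_insert_self i s))).trans
      (add_le_add le_rfl (ih fun j hj => hK j (Finset.mem_insert_of_mem hj)))

theorem norm_le_half_of_one_le_hker {w : ℂ} (hw : 1 ≤ hker w) : ‖w‖ ≤ 1 / 2 := by
  have hpos : 0 < ‖w‖ := by
    refine (norm_nonneg w).lt_of_ne fun h => ?_
    rw [hker, ← h] at hw
    norm_num at hw
  have h2 : 2 ≤ 1 / ‖w‖ :=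
    calc (2 : ℝ) ≤ Real.exp 1 := by linarith [Real.add_one_le_exp 1]
      _ ≤ 1 / ‖w‖ := (Real.le_log_iff_exp_le (one_div_pos.2 hpos)).1 hw
  rw [le_div_iff₀ hpos] at h2
  linarith

theorem Complex.norm_one_sub_mul_conj_sq (z w : ℂ) :
    ‖1 - z * (starRingEnd ℂ) w‖ ^ 2 = ‖z - w‖ ^ 2 + (1 - ‖z‖ ^ 2) * (1 - ‖w‖ ^ 2) := by
  simp only [Complex.sq_norm, Complex.normSq_apply, Complex.sub_re, Complex.sub_im,
    Complex.mul_re, Complex.mul_im, Complex.one_re, Complex.one_im, Complex.conj_re,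
    Complex.conj_im]
  ring

theorem ofReal_log_le_greenFn_half {w : ℂ} (hw : ‖w‖ ≤ 1 / 2) :
    ENNReal.ofReal (Real.log (5 / 4)) ≤ greenFn (1 / 2) w := by
  rw [greenFn]
  split_ifs with hzw
  · exact le_top
  have hhalf : ‖(1 / 2 : ℂ)‖ = 1 / 2 := by norm_num
  have hpos : 0 < ‖(1 / 2 : ℂ) - w‖ := norm_pos_iff.2 (sub_ne_zero.2 hzw)
  have hle : ‖(1 / 2 : ℂ) - w‖ ≤ 1 := by linarith [norm_sub_le (1 / 2 : ℂ) w]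
  have hsq := Complex.norm_one_sub_mul_conj_sq (1 / 2) w
  rw [hhalf] at hsq
  -- `‖1 - w̄/2‖² ≥ ‖1/2 - w‖² + 9/16 ≥ (25/16) ‖1/2 - w‖²`, the last step as `‖1/2 - w‖ ≤ 1`
  have hratio : 5 / 4 * ‖(1 / 2 : ℂ) - w‖ ≤ ‖1 - (1 / 2 : ℂ) * (starRingEnd ℂ) w‖ := by
    nlinarith [norm_nonneg (1 - (1 / 2 : ℂ) * (starRingEnd ℂ) w), norm_nonneg w]
  refine ENNReal.ofReal_le_ofReal (Real.log_le_log (by norm_num) ?_)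
  rwa [le_div_iff₀ hpos]

theorem hker_half : hker (1 / 2) = Real.log 2 := by
  norm_num [hker]

theorem half_mem_puncDisk : (1 / 2 : ℂ) ∈ puncDisk :=
  ⟨show ‖(1 / 2 : ℂ)‖ < 1 by norm_num, by norm_num⟩

theorem capH_ne_top_of_hker_mem_Icc {K : Set ℂ} {M : ℝ} (hK : ∀ z ∈ K, hker z ∈ Icc 1 M) :
    capH K ≠ ⊤ := by
  set c := ENNReal.ofReal (Real.log (5 / 4) / max M 1) with hc_def
  have hc : c ≠ 0 := (ENNReal.ofReal_pos.2 (div_pos (Real.log_pos (by norm_num))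
    (zero_lt_one.trans_le (le_max_right M 1)))).ne'
  -- an admissible measure has `c μ(K) ≤ ∫ G(1/2, w)/h(w) dμ(w) ≤ h(1/2)`
  have hbound : capH K ≤ ENNReal.ofReal (Real.log 2) / c := by
    refine sSup_le ?_
    rintro _ ⟨μ, -, hsupp, hpot, rfl⟩
    have hlow : ∀ w ∈ K, c ≤ greenFn (1 / 2) w / ENNReal.ofReal (hker w) := fun w hw => by
      rw [hc_def, ENNReal.ofReal_div_of_pos (zero_lt_one.trans_le (le_max_right M 1))]
      exact ENNReal.div_le_div
        (ofReal_log_le_greenFn_half (norm_le_half_of_one_le_hker (hK w hw).1))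
        (ENNReal.ofReal_le_ofReal ((hK w hw).2.trans (le_max_left M 1)))
    rw [ENNReal.le_div_iff_mul_le (Or.inl hc) (Or.inl ENNReal.ofReal_ne_top), mul_comm,
      ← hker_half]
    calc c * μ K ≤ c * μ univ := by gcongr; exact subset_univ K
      _ = ∫⁻ _, c ∂μ := (lintegral_const c).symm
      _ ≤ hPotential μ (1 / 2) := lintegral_mono_ae (ae_iff.2 hsupp |>.mono hlow)
      _ ≤ ENNReal.ofReal (hker (1 / 2)) := hpot _ half_mem_puncDisk
  exact ne_top_of_le_ne_top (ENNReal.div_lt_top ENNReal.ofReal_ne_top hc).ne hbound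

theorem measurable_hker : Measurable hker := by
  unfold hker; fun_prop

def shell (Ω : Set ℂ) (s t : ℝ) : Set ℂ := {z | s ≤ hker z ∧ hker z ≤ t} \ Ω

theorem shell_subset_shell {Ω : Set ℂ} {s s' t t' : ℝ} (hs : s' ≤ s) (ht : t ≤ t') :
    shell Ω s t ⊆ shell Ω s' t' :=
  sdiff_subset_sdiff_left fun _ hz => ⟨hs.trans hz.1, hz.2.trans ht⟩

theorem measurableSet_shell {Ω : Set ℂ} (hΩ : MeasurableSet Ω) (s t : ℝ) :
    MeasurableSet (shell Ω s t) :=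
  (measurable_hker measurableSet_Icc).diff hΩ

theorem shell_one_pow_subset_biUnion {a : ℝ} (ha : 1 < a) (Ω : Set ℂ) (n : ℕ) :
    shell Ω 1 (a ^ n) ⊆ ⋃ k ∈ Finset.range (n + 1), shell Ω (a ^ k) (a ^ (k + 1)) := by
  rintro z ⟨⟨hz1, hzn⟩, hzΩ⟩
  obtain ⟨k, hk, hk'⟩ := exists_nat_pow_near hz1 ha
  have hkn : k ≤ n := (pow_le_pow_iff_right₀ ha).1 (hk.trans hzn)
  exact mem_iUnion₂.2 ⟨k, Finset.mem_range_succ_iff.2 hkn, ⟨hk, hk'.le⟩, hzΩ⟩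

theorem capH_shell_ne_top (Ω : Set ℂ) {s : ℝ} (hs : 1 ≤ s) (t : ℝ) : capH (shell Ω s t) ≠ ⊤ :=
  capH_ne_top_of_hker_mem_Icc fun _ hz => ⟨hs.trans hz.1.1, hz.1.2⟩

theorem wiener_series_diverges_iff_wiener_integral_diverges_general
    (Ω : Set ℂ) (hΩopen : IsOpen Ω)
    (a : ℝ) (ha : 1 < a) (E : ℕ → Set ℂ)
    (hEdef : ∀ n : ℕ, E n =
      {z : ℂ | a ^ n ≤ Real.log (1 / ‖z‖) ∧
        Real.log (1 / ‖z‖) ≤ a ^ (n + 1)} \ Ω)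
    (Erho : ℝ → Set ℂ)
    (hErho : ∀ ρ : ℝ, Erho ρ =
      {z : ℂ | 1 ≤ Real.log (1 / ‖z‖) ∧ Real.log (1 / ‖z‖) ≤ ρ} \ Ω) :
    (∑' n : ℕ, ENNReal.ofReal (a ^ (-(n + 1 : ℝ))) * capH (E (n + 1)) = ⊤) ↔
      (∫⁻ ρ in Set.Ioi (1 : ℝ), capH (Erho ρ) / ENNReal.ofReal (ρ ^ 2) = ⊤) := by
  obtain rfl : E = fun n => shell Ω (a ^ n) (a ^ (n + 1)) := funext hEdef
  obtain rfl : Erho = shell Ω 1 := funext hErho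
  have ha0 : 0 < a := one_pos.trans ha
  have hr0 : ENNReal.ofReal a⁻¹ ≠ 0 := (ENNReal.ofReal_pos.2 (inv_pos.2 ha0)).ne'
  have hr1 : ENNReal.ofReal a⁻¹ < 1 := ENNReal.ofReal_lt_one.2 (inv_lt_one_of_one_lt₀ ha)
  simp_rw [← Nat.cast_succ, ENNReal.ofReal_rpow_neg_natCast ha0]
  rw [lintegral_Ioi_one_div_sq_eq_top_iff (fun _ _ h => capH_mono (shell_subset_shell le_rfl h)) ha,
    ENNReal.tsum_pow_mul_eq_top_iff_of_le_of_le_sum_range hr0 hr1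
      (fun k => capH_mono (shell_subset_shell (one_le_pow₀ ha.le) le_rfl))
      (fun n => (capH_mono (shell_one_pow_subset_biUnion ha Ω n)).trans
        (capH_biUnion_le _ fun k _ => measurableSet_shell hΩopen.measurableSet _ _)),
    tsum_eq_zero_add' (f := fun n => ENNReal.ofReal a⁻¹ ^ n * capH (shell Ω (a ^ n) (a ^ (n + 1))))
      ENNReal.summable]
  simp only [pow_zero, one_mul, ENNReal.add_eq_top, capH_shell_ne_top Ω le_rfl, false_or]

/-- Equivalence of conditions (5) and (6) of Theorem 1.1: the Wiener series diverges iff the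
Wiener integral diverges. -/
theorem wiener_series_diverges_iff_wiener_integral_diverges
    (Ω : Set ℂ) (hΩD : Ω ⊆ puncDisk) (hΩopen : IsOpen Ω)
    (a : ℝ) (ha : 1 < a) (E : ℕ → Set ℂ)
    (hEdef : ∀ n : ℕ, E n =
      {z : ℂ | a ^ n ≤ Real.log (1 / ‖z‖) ∧
        Real.log (1 / ‖z‖) ≤ a ^ (n + 1)} \ Ω)
    (Erho : ℝ → Set ℂ)
    (hErho : ∀ ρ : ℝ, Erho ρ =
      {z : ℂ | 1 ≤ Real.log (1 / ‖z‖) ∧ Real.log (1 / ‖z‖) ≤ ρ} \ Ω) :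
    (∑' n : ℕ, ENNReal.ofReal (a ^ (-(n + 1 : ℝ))) * capH (E (n + 1)) = ⊤) ↔
      (∫⁻ ρ in Set.Ioi (1 : ℝ), capH (Erho ρ) / ENNReal.ofReal (ρ ^ 2) = ⊤) :=
  wiener_series_diverges_iff_wiener_integral_diverges_general Ω hΩopen a ha E hEdef Erho hErho

end
end

section
/- Let Ω = {z ∈ ℂ : 0 < |z| < 1} \ {x ∈ ℝ : 0 ≤ x < 1} be the punctured open unit disk with the radius [0,1) on the positive real axis removed. If u is harmonic on Ω, lim_{z→ξ, z∈Ω} u(z) = 0 for every ξ ∈ ∂Ω \ {0}, and there exist C > 0 and δ ∈ (0,1) with |u(z)| ≤ C·log(1/|z|) for all z ∈ Ω with |z| < δ, then u vanishes identically on Ω. (The logarithmic singularity at the origin is removable for the disk with a deleted radius, since the Wiener series diverges.) -/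
open MeasureTheory Filter Set
open scoped ENNReal Topology

noncomputable section

/-- `u` is harmonic on `U`: twice continuously differentiable with vanishing Laplacian
`Δu = ∂²u/∂x² + ∂²u/∂y² = 0` on `U`. -/
def HarmonicOn (u : ℂ → ℝ) (U : Set ℂ) : Prop :=
  ContDiffOn ℝ 2 u U ∧
    ∀ z ∈ U, iteratedFDeriv ℝ 2 u z ![1, 1] + iteratedFDeriv ℝ 2 u z ![Complex.I, Complex.I] = 0

/-!
On `Ω` the square root `s(z)` with values in the upper half-plane is holomorphic, and the angle
`arg ((s - ρ) / (s + ρ))` under which `[-ρ, ρ]` is seen from `s` is a nonnegative harmonic barrier,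
equal to `π / 2` on the circle `‖z‖ = ρ²` (Thales) and `O(ρ)` at each fixed `z`. The maximum
principle on `Ω ∩ {‖z‖ > ρ²}` bounds `u` by `(2 / π) C log (1 / ρ²)` times this barrier, that is by
`O(ρ log (1 / ρ))`, which tends to `0` with `ρ`; the same argument applies to `-u`.
-/

open InnerProductSpace Laplacian Complex
open scoped Real

theorem IsLocalMax.deriv_deriv_nonpos {f : ℝ → ℝ} {x : ℝ} (h : IsLocalMax f x)
    (hc : ContinuousAt f x) : deriv (deriv f) x ≤ 0 := by
  by_contra! hpos
  have hmin : IsLocalMin f x := isLocalMin_of_deriv_deriv_pos hpos h.deriv_eq_zero hc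
  have hconst : f =ᶠ[𝓝 x] fun _ => f x := by
    filter_upwards [h, hmin] with y h₁ h₂ using le_antisymm h₁ h₂
  have hderiv : deriv f =ᶠ[𝓝 x] fun _ => 0 := by
    filter_upwards [hconst.eventually_nhds] with y (hy : f =ᶠ[𝓝 y] fun _ => f x)
    rw [hy.deriv_eq, deriv_const]
  simp [hderiv.deriv_eq] at hpos

section LocalMax

variable {E : Type*} [NormedAddCommGroup E] [NormedSpace ℝ E] {f : E → ℝ} {x : E}

theorem IsLocalMax.fderiv_fderiv_apply_self_nonpos (h : IsLocalMax f x)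
    (hf : ContDiffAt ℝ 2 f x) (v : E) : fderiv ℝ (fderiv ℝ f) x v v ≤ 0 := by
  set γ : ℝ → E := fun t => x + t • v
  have hγ : ∀ t, HasDerivAt γ v t := fun t => by
    simpa [γ] using ((hasDerivAt_id t).smul_const v).const_add x
  have hγ0 : γ 0 = x := by simp [γ]
  rw [← hγ0] at h hf ⊢
  have hγt : Tendsto γ (𝓝 0) (𝓝 (γ 0)) := (hγ 0).continuousAt.tendsto
  have hdiff : ∀ᶠ y in 𝓝 (γ 0), DifferentiableAt ℝ f y :=
    hf.eventually (by simp) |>.mono fun y hy => hy.differentiableAt two_ne_zero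
  have hderiv : deriv (f ∘ γ) =ᶠ[𝓝 0] fun t => fderiv ℝ f (γ t) v := by
    filter_upwards [hγt.eventually hdiff] with t ht
    exact (ht.hasFDerivAt.comp_hasDerivAt t (hγ t)).deriv
  have hf' : HasFDerivAt (fderiv ℝ f) (fderiv ℝ (fderiv ℝ f) (γ 0)) (γ 0) :=
    ((hf.fderiv_right (le_refl 2)).differentiableAt one_ne_zero).hasFDerivAt
  have hsecond : HasDerivAt (deriv (f ∘ γ)) (fderiv ℝ (fderiv ℝ f) (γ 0) v v) 0 := by
    refine HasDerivAt.congr_of_eventuallyEq ?_ hderiv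
    simpa using (hf'.comp_hasDerivAt 0 (hγ 0)).clm_apply (hasDerivAt_const 0 v)
  rw [← hsecond.deriv]
  exact IsLocalMax.deriv_deriv_nonpos (h.comp_tendsto hγt)
    (hf.continuousAt.comp (hγ 0).continuousAt)

end LocalMax

section Laplacian

variable {E : Type*} [NormedAddCommGroup E] [InnerProductSpace ℝ E] [FiniteDimensional ℝ E]
  {f : E → ℝ} {x : E}

theorem IsLocalMax.laplacian_nonpos (h : IsLocalMax f x) (hf : ContDiffAt ℝ 2 f x) :
    Δ f x ≤ 0 := by
  rw [laplacian_eq_iteratedFDeriv_stdOrthonormalBasis]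
  refine Finset.sum_nonpos fun i _ => ?_
  simpa [iteratedFDeriv_two_apply] using h.fderiv_fderiv_apply_self_nonpos hf _

theorem laplacian_norm_sq (x : E) :
    Δ (fun y : E => ‖y‖ ^ 2) x = 2 * Module.finrank ℝ E := by
  have hfd : fderiv ℝ (fun y : E => ‖y‖ ^ 2) = (2 • innerSL ℝ : E →L[ℝ] E →L[ℝ] ℝ) := by
    ext1 y; simp
  simp only [laplacian_eq_iteratedFDeriv_stdOrthonormalBasis, iteratedFDeriv_two_apply, hfd,
    ContinuousLinearMap.fderiv]
  have hb (i) : innerSL ℝ (stdOrthonormalBasis ℝ E i) (stdOrthonormalBasis ℝ E i) = 1 := by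
    rw [innerSL_apply_apply, real_inner_self_eq_norm_sq, (stdOrthonormalBasis ℝ E).norm_eq_one]
    norm_num
  simp [hb, mul_comm]

end Laplacian

theorem IsOpen.exists_isLocalMax_of_frontier_lt {X : Type*} [PseudoMetricSpace X]
    [ProperSpace X] {V : Set X} (hV : IsOpen V) (hVb : Bornology.IsBounded V) {w : X → ℝ}
    (hw : ContinuousOn w V) {z₀ : X} (hz₀ : z₀ ∈ V)
    (hbd : ∀ ξ ∈ frontier V, ∀ᶠ z in 𝓝[V] ξ, w z < w z₀) :
    ∃ z ∈ V, IsLocalMax w z := by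
  set K := {z ∈ V | w z₀ ≤ w z}
  have hz₀K : z₀ ∈ closure K := subset_closure ⟨hz₀, le_rfl⟩
  have hKV : closure K ⊆ V := by
    intro ξ hξ
    by_contra hξV
    have hfr : ξ ∈ frontier V := ⟨closure_mono (sep_subset _ _) hξ, by rwa [hV.interior_eq]⟩
    have hlt : ∀ᶠ z in 𝓝[K] ξ, w z < w z₀ :=
      (hbd ξ hfr).filter_mono (nhdsWithin_mono _ (sep_subset _ _))
    have := mem_closure_iff_nhdsWithin_neBot.mp hξ
    obtain ⟨z, hz, hzK⟩ := (hlt.and self_mem_nhdsWithin).exists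
    exact hz.not_ge hzK.2
  obtain ⟨z, hz, hmax⟩ := (hVb.subset (sep_subset _ _)).isCompact_closure.exists_isMaxOn
    ⟨z₀, hz₀K⟩ (hw.mono hKV)
  refine ⟨z, hKV hz, ?_⟩
  filter_upwards [hV.mem_nhds (hKV hz)] with y hy
  by_cases hyK : w z₀ ≤ w y
  · exact hmax (subset_closure ⟨hy, hyK⟩)
  · exact (not_le.mp hyK).le.trans (hmax hz₀K)

theorem InnerProductSpace.HarmonicOnNhd.nonpos_of_frontier_lt {E : Type*}
    [NormedAddCommGroup E] [InnerProductSpace ℝ E] [FiniteDimensional ℝ E] [Nontrivial E]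
    {V : Set E} (hV : IsOpen V) (hVb : Bornology.IsBounded V) {v : E → ℝ}
    (hv : HarmonicOnNhd v V)
    (hbd : ∀ ξ ∈ frontier V, ∀ ε > 0, ∀ᶠ z in 𝓝[V] ξ, v z < ε) :
    ∀ z ∈ V, v z ≤ 0 := by
  intro z₁ hz₁
  by_contra! hpos
  obtain ⟨R, hR⟩ := hVb.subset_closedBall 0
  have hnorm : ∀ z ∈ V, ‖z‖ ^ 2 ≤ R ^ 2 := fun z hz =>
    pow_le_pow_left₀ (norm_nonneg z) (mem_closedBall_zero_iff.mp (hR hz)) 2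
  -- `w` has positive Laplacian, hence no local maximum, but it is small on the frontier.
  set ε := v z₁ / (2 * (R ^ 2 + 1))
  have hε : 0 < ε := by positivity
  have hεR : ε * R ^ 2 < v z₁ / 2 := by
    rw [div_mul_eq_mul_div, div_lt_div_iff₀ (by positivity) two_pos]
    nlinarith [sq_nonneg R]
  set w : E → ℝ := v + ε • fun y => ‖y‖ ^ 2
  have hw : ∀ z, w z = v z + ε * ‖z‖ ^ 2 := fun z => rfl
  have hq : ContDiff ℝ 2 (fun y : E => ‖y‖ ^ 2) := contDiff_norm_sq ℝ
  obtain ⟨z, hz, hmax⟩ : ∃ z ∈ V, IsLocalMax w z := by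
    refine hV.exists_isLocalMax_of_frontier_lt hVb ?_ hz₁ fun ξ hξ => ?_
    · exact hv.contDiffOn.continuousOn.add (hq.continuous.continuousOn.const_smul ε)
    · filter_upwards [hbd ξ hξ _ (half_pos hpos), self_mem_nhdsWithin] with z hvz hz
      rw [hw, hw]
      nlinarith [hnorm z hz, sq_nonneg ‖z₁‖]
  have hεq : ContDiffAt ℝ 2 (ε • fun y : E => ‖y‖ ^ 2) z := hq.contDiffAt.const_smul ε
  have hΔ : Δ w z = ε * (2 * Module.finrank ℝ E) := by
    rw [(hv z hz).1.laplacian_add hεq, laplacian_smul _ hq.contDiffAt,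
      (hv z hz).2.self_of_nhds, laplacian_norm_sq]
    simp
  have hdim : (0 : ℝ) < Module.finrank ℝ E := Nat.cast_pos.mpr Module.finrank_pos
  have := hmax.laplacian_nonpos ((hv z hz).1.add hεq)
  rw [hΔ] at this
  nlinarith

theorem Complex.arg_le_im_div_re {w : ℂ} (hre : 0 < w.re) (him : 0 ≤ w.im) :
    arg w ≤ w.im / w.re := by
  rw [← tan_arg]
  exact Real.le_tan (arg_nonneg_iff.2 him) (arg_lt_pi_div_two_iff.2 (Or.inl hre))

section Thales

variable {s : ℂ} {ρ : ℝ}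

theorem Complex.re_sub_div_add_ofReal (s : ℂ) (ρ : ℝ) :
    ((s - ρ) / (s + ρ)).re = (‖s‖ ^ 2 - ρ ^ 2) / normSq (s + ρ) := by
  rw [div_re, Complex.sq_norm, normSq_apply, normSq_apply]
  simp only [sub_re, sub_im, add_re, add_im, ofReal_re, ofReal_im]
  ring

theorem Complex.im_sub_div_add_ofReal (s : ℂ) (ρ : ℝ) :
    ((s - ρ) / (s + ρ)).im = 2 * ρ * s.im / normSq (s + ρ) := by
  rw [div_im, normSq_apply]
  simp only [sub_re, sub_im, add_re, add_im, ofReal_re, ofReal_im]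
  ring

theorem Complex.normSq_add_ofReal_pos (hs : 0 < s.im) (ρ : ℝ) : 0 < normSq (s + ρ) :=
  normSq_pos.2 fun h => hs.ne' (by simpa using congrArg im h)

theorem Complex.im_sub_div_add_ofReal_pos (hs : 0 < s.im) (hρ : 0 < ρ) :
    0 < ((s - ρ) / (s + ρ)).im := by
  rw [im_sub_div_add_ofReal]
  have := normSq_add_ofReal_pos hs ρ
  positivity

theorem Complex.arg_sub_div_add_ofReal_of_norm_eq (hs : 0 < s.im) (hρ : 0 < ρ) (h : ‖s‖ = ρ) :
    arg ((s - ρ) / (s + ρ)) = π / 2 :=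
  arg_eq_pi_div_two_iff.2 ⟨by simp [re_sub_div_add_ofReal, h], im_sub_div_add_ofReal_pos hs hρ⟩

theorem Complex.arg_sub_div_add_ofReal_le (hs : 0 < s.im) (hρ : 0 < ρ) (h : ρ < ‖s‖) :
    arg ((s - ρ) / (s + ρ)) ≤ 2 * ρ * s.im / (‖s‖ ^ 2 - ρ ^ 2) := by
  have hns := normSq_add_ofReal_pos hs ρ
  have hd : 0 < ‖s‖ ^ 2 - ρ ^ 2 := by nlinarith
  refine (arg_le_im_div_re ?_ (im_sub_div_add_ofReal_pos hs hρ).le).trans_eq ?_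
  · rw [re_sub_div_add_ofReal]; positivity
  · rw [re_sub_div_add_ofReal, im_sub_div_add_ofReal]
    field_simp

end Thales

/-- The square root of `z` in the upper half-plane, holomorphic off `[0, ∞)`. -/
def upperSqrt (z : ℂ) : ℂ := I * exp (log (-z) / 2)

section UpperSqrt

variable {z : ℂ}

theorem upperSqrt_im_pos (hz : -z ∈ slitPlane) : 0 < (upperSqrt z).im := by
  have harg : arg (-z) ≠ π := (mem_slitPlane_iff_arg.1 hz).1
  have him : (log (-z) / 2).im = arg (-z) / 2 := by simp [log_im]
  simp only [upperSqrt, mul_im, I_re, I_im, zero_mul, one_mul, zero_add, exp_re, him]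
  refine mul_pos (Real.exp_pos _) (Real.cos_pos_of_mem_Ioo ⟨?_, ?_⟩)
  · linarith [neg_pi_lt_arg (-z)]
  · linarith [lt_of_le_of_ne (arg_le_pi (-z)) harg]

theorem sq_norm_upperSqrt (hz : z ≠ 0) : ‖upperSqrt z‖ ^ 2 = ‖z‖ := by
  rw [upperSqrt, norm_mul, norm_I, one_mul, norm_exp, sq, ← Real.exp_add]
  simp [log_re, Real.exp_log (norm_pos_iff.2 hz)]

theorem differentiableAt_upperSqrt (hz : -z ∈ slitPlane) : DifferentiableAt ℂ upperSqrt z :=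
  (((differentiableAt_id.neg.clog hz).div_const 2).cexp).const_mul I

end UpperSqrt

theorem isOpen_neg_slitPlane : IsOpen {z : ℂ | -z ∈ slitPlane} :=
  isOpen_slitPlane.preimage continuous_neg

def slitBarrier (ρ : ℝ) (z : ℂ) : ℝ := arg ((upperSqrt z - ρ) / (upperSqrt z + ρ))

section SlitBarrier

variable {ρ : ℝ} {z : ℂ}

theorem harmonicAt_slitBarrier (hρ : 0 < ρ) (hz : -z ∈ slitPlane) :
    HarmonicAt (slitBarrier ρ) z := by
  unfold slitBarrier
  have hq : ∀ w : ℂ, -w ∈ slitPlane →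
      DifferentiableAt ℂ (fun w => log ((upperSqrt w - ρ) / (upperSqrt w + ρ))) w := fun w hw =>
    (((differentiableAt_upperSqrt hw).sub_const _).div
      ((differentiableAt_upperSqrt hw).add_const _)
      (normSq_pos.1 (normSq_add_ofReal_pos (upperSqrt_im_pos hw) ρ))).clog
      (Or.inr (im_sub_div_add_ofReal_pos (upperSqrt_im_pos hw) hρ).ne')
  have han := analyticAt_iff_eventually_differentiableAt.2 <|
    Filter.mem_of_superset (isOpen_neg_slitPlane.mem_nhds hz) hq
  simpa [log_im] using han.harmonicAt_im

theorem slitBarrier_nonneg (hρ : 0 < ρ) (hz : -z ∈ slitPlane) : 0 ≤ slitBarrier ρ z :=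
  arg_nonneg_iff.2 (im_sub_div_add_ofReal_pos (upperSqrt_im_pos hz) hρ).le

theorem slitBarrier_of_norm_eq (hρ : 0 < ρ) (hz : -z ∈ slitPlane) (h : ‖z‖ = ρ ^ 2) :
    slitBarrier ρ z = π / 2 := by
  refine arg_sub_div_add_ofReal_of_norm_eq (upperSqrt_im_pos hz) hρ ?_
  rw [← sq_eq_sq₀ (norm_nonneg _) hρ.le, sq_norm_upperSqrt (neg_ne_zero.1 (slitPlane_ne_zero hz)),
    h]

theorem slitBarrier_le (hρ : 0 < ρ) (hz : -z ∈ slitPlane) (h : ρ ^ 2 < ‖z‖) :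
    slitBarrier ρ z ≤ 2 * ρ * (upperSqrt z).im / (‖z‖ - ρ ^ 2) := by
  have hsq := sq_norm_upperSqrt (neg_ne_zero.1 (slitPlane_ne_zero hz))
  have hlt : ρ < ‖upperSqrt z‖ := lt_of_pow_lt_pow_left₀ 2 (norm_nonneg _) (hsq ▸ h)
  simpa [slitBarrier, hsq] using arg_sub_div_add_ofReal_le (upperSqrt_im_pos hz) hρ hlt

end SlitBarrier

theorem puncDisk_diff_radius :
    puncDisk \ {x : ℂ | ∃ t : ℝ, 0 ≤ t ∧ t < 1 ∧ x = (t : ℂ)} =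
      {z : ℂ | ‖z‖ < 1} ∩ {z | -z ∈ slitPlane} := by
  ext z
  simp only [puncDisk, unitDisk, Set.mem_sdiff, Set.mem_ofPred_eq, Set.mem_singleton_iff,
    Set.mem_inter_iff, mem_slitPlane_iff, neg_re, neg_im, neg_pos, ne_eq, neg_eq_zero, not_exists,
    not_and]
  constructor
  · rintro ⟨⟨hz1, hz0⟩, hrad⟩
    refine ⟨hz1, ?_⟩
    by_contra! h
    have hz : z = (z.re : ℂ) := ext rfl (by simp [h.2])
    exact hrad z.re h.1 ((re_le_norm z).trans_lt hz1) hz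
  · rintro ⟨hz1, h⟩
    refine ⟨⟨hz1, ?_⟩, ?_⟩
    · rintro rfl; simp at h
    · rintro t ht - rfl
      simp only [ofReal_re, ofReal_im, not_true_eq_false, or_false] at h
      linarith

theorem HarmonicOn.harmonicOnNhd {u : ℂ → ℝ} {U : Set ℂ} (hU : IsOpen U)
    (hu : HarmonicOn u U) : HarmonicOnNhd u U := fun x hx => by
  refine ⟨hu.1.contDiffAt (hU.mem_nhds hx), ?_⟩
  filter_upwards [hU.mem_nhds hx] with y hy
  rw [laplacian_eq_iteratedFDeriv_complexPlane]
  exact hu.2 y hy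

section SlitDomain

variable {Ω : Set ℂ} {v : ℂ → ℝ}

theorem InnerProductSpace.HarmonicOnNhd.le_mul_slitBarrier (hv : HarmonicOnNhd v Ω)
    (hΩ : IsOpen Ω) (hΩb : Bornology.IsBounded Ω) (hΩs : ∀ z ∈ Ω, -z ∈ slitPlane)
    (hbd : ∀ ξ ∈ frontier Ω \ {0}, ∀ ε > 0, ∀ᶠ z in 𝓝[Ω] ξ, v z < ε) {ρ K : ℝ} (hρ : 0 < ρ)
    (hK : 0 ≤ K) (hcirc : ∀ z ∈ Ω, ‖z‖ = ρ ^ 2 → v z ≤ K) {z : ℂ} (hz : z ∈ Ω) (hzρ : ρ ^ 2 < ‖z‖) :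
    v z ≤ K * (2 / π) * slitBarrier ρ z := by
  set V := Ω ∩ {z | ρ ^ 2 < ‖z‖}
  set b := (K * (2 / π)) • slitBarrier ρ
  have hVΩ : V ⊆ Ω := inter_subset_left
  have hV : IsOpen V := hΩ.inter (isOpen_lt continuous_const continuous_norm)
  have hb : ∀ w ∈ Ω, HarmonicAt b w := fun w hw =>
    (harmonicAt_slitBarrier hρ (hΩs w hw)).const_smul
  have hb0 : ∀ w ∈ Ω, 0 ≤ b w := fun w hw =>
    mul_nonneg (by positivity) (slitBarrier_nonneg hρ (hΩs w hw))
  have hcl : closure V ⊆ {w | ρ ^ 2 ≤ ‖w‖} :=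
    closure_minimal (fun w (hw : w ∈ V) => show ρ ^ 2 ≤ ‖w‖ from hw.2.le)
      (isClosed_le continuous_const continuous_norm)
  suffices ∀ w ∈ V, (v - b) w ≤ 0 by
    simpa [b, sub_nonpos, mul_assoc] using this z ⟨hz, hzρ⟩
  refine HarmonicOnNhd.nonpos_of_frontier_lt hV (hΩb.subset hVΩ)
    (fun w hw => (hv w (hVΩ hw)).sub (hb w (hVΩ hw))) fun ξ hξ ε hε => ?_
  have hξV : ξ ∉ V := fun h => hξ.2 (hV.interior_eq.symm ▸ h)
  have hξρ : ρ ^ 2 ≤ ‖ξ‖ := hcl hξ.1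
  by_cases hξΩ : ξ ∈ Ω
  · replace hξρ : ‖ξ‖ = ρ ^ 2 := hξρ.antisymm' (not_lt.1 fun h => hξV ⟨hξΩ, h⟩)
    have hle : (v - b) ξ ≤ 0 := by
      simp only [b, Pi.sub_apply, Pi.smul_apply, smul_eq_mul,
        slitBarrier_of_norm_eq hρ (hΩs ξ hξΩ) hξρ]
      field_simp
      linarith [hcirc ξ hξΩ hξρ]
    have hcont : ContinuousAt (v - b) ξ := ((hv ξ hξΩ).sub (hb ξ hξΩ)).1.continuousAt
    exact nhdsWithin_le_nhds (hcont.eventually_lt continuousAt_const (by linarith))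
  · have hξfr : ξ ∈ frontier Ω \ {0} := ⟨⟨closure_mono hVΩ hξ.1, by rwa [hΩ.interior_eq]⟩,
      norm_pos_iff.1 ((pow_pos hρ 2).trans_le hξρ)⟩
    filter_upwards [(hbd ξ hξfr ε hε).filter_mono (nhdsWithin_mono _ hVΩ), self_mem_nhdsWithin]
      with w hw hwV
    simp only [Pi.sub_apply]
    linarith [hb0 w (hVΩ hwV)]

theorem InnerProductSpace.HarmonicOnNhd.nonpos_of_le_log (hv : HarmonicOnNhd v Ω)
    (hΩ : IsOpen Ω) (hΩb : Bornology.IsBounded Ω) (hΩs : ∀ z ∈ Ω, -z ∈ slitPlane)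
    (hbd : ∀ ξ ∈ frontier Ω \ {0}, ∀ ε > 0, ∀ᶠ z in 𝓝[Ω] ξ, v z < ε) {C δ : ℝ} (hC : 0 ≤ C)
    (hδ : 0 < δ) (hgr : ∀ z ∈ Ω, ‖z‖ < δ → v z ≤ C * Real.log (1 / ‖z‖)) :
    ∀ z ∈ Ω, v z ≤ 0 := by
  intro z hz
  set S := (upperSqrt z).im
  set A := ‖z‖
  have hA : 0 < A := norm_pos_iff.2 (neg_ne_zero.1 (slitPlane_ne_zero (hΩs z hz)))
  set F : ℝ → ℝ := fun ρ => -(8 * C * S / π) * (ρ * Real.log ρ) / (A - ρ ^ 2)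
  have hF : Tendsto F (𝓝[>] 0) (𝓝 0) := by
    have : Tendsto F (𝓝 0) (𝓝 (F 0)) :=
      (tendsto_const_nhds.mul (Real.continuous_mul_log.tendsto 0)).div
        (tendsto_const_nhds.sub ((continuous_pow 2).tendsto 0)) (by simpa using hA.ne')
    simpa [F] using this.mono_left nhdsWithin_le_nhds
  have hsmall : ∀ᶠ ρ in 𝓝 (0 : ℝ), ρ < 1 ∧ ρ ^ 2 < min δ A :=
    (eventually_lt_nhds one_pos).and <|
      ((continuous_pow 2).tendsto' 0 0 (by simp)).eventually (eventually_lt_nhds (lt_min hδ hA))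
  refine ge_of_tendsto hF ?_
  filter_upwards [self_mem_nhdsWithin, nhdsWithin_le_nhds hsmall] with ρ (hρ : 0 < ρ) hρs
  obtain ⟨hρ1, hρδ, hρA⟩ : ρ < 1 ∧ ρ ^ 2 < δ ∧ ρ ^ 2 < A := ⟨hρs.1, lt_min_iff.1 hρs.2⟩
  have hK : 0 ≤ C * Real.log (1 / ρ ^ 2) :=
    mul_nonneg hC (Real.log_nonneg (one_le_one_div (by positivity) (by nlinarith)))
  have hcirc : ∀ w ∈ Ω, ‖w‖ = ρ ^ 2 → v w ≤ C * Real.log (1 / ρ ^ 2) := fun w hw hwρ => by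
    simpa [hwρ] using hgr w hw (hwρ ▸ hρδ)
  calc v z ≤ C * Real.log (1 / ρ ^ 2) * (2 / π) * slitBarrier ρ z :=
        hv.le_mul_slitBarrier hΩ hΩb hΩs hbd hρ hK hcirc hz hρA
    _ ≤ C * Real.log (1 / ρ ^ 2) * (2 / π) * (2 * ρ * S / (A - ρ ^ 2)) := by
        gcongr
        exact slitBarrier_le hρ (hΩs z hz) hρA
    _ = F ρ := by
        simp only [F, one_div, Real.log_inv, Real.log_pow]
        push_cast
        ring

end SlitDomain

/-- The logarithmic singularity at the origin is removable for the punctured unit disk with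
the radius `[0,1)` deleted. -/
theorem removable_log_singularity_disk_minus_radius
    (Ω : Set ℂ) (hΩ : Ω = puncDisk \ {x : ℂ | ∃ t : ℝ, 0 ≤ t ∧ t < 1 ∧ x = (t : ℂ)})
    (u : ℂ → ℝ) (hu : HarmonicOn u Ω)
    (hbdry : ∀ ξ ∈ frontier Ω \ {0}, Tendsto u (𝓝[Ω] ξ) (𝓝 0))
    (hgrowth : ∃ C > (0 : ℝ), ∃ δ ∈ Set.Ioo (0 : ℝ) 1,
      ∀ z ∈ Ω, ‖z‖ < δ → |u z| ≤ C * Real.log (1 / ‖z‖)) :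
    ∀ z ∈ Ω, u z = 0 := by
  obtain ⟨C, hC, δ, hδ, hgr⟩ := hgrowth
  rw [puncDisk_diff_radius] at hΩ
  have hΩo : IsOpen Ω :=
    hΩ ▸ (isOpen_lt continuous_norm continuous_const).inter isOpen_neg_slitPlane
  have hΩb : Bornology.IsBounded Ω :=
    (Metric.isBounded_ball (x := 0) (r := 1)).subset fun z hz => by simpa using (hΩ ▸ hz).1
  have hΩs : ∀ z ∈ Ω, -z ∈ slitPlane := fun z hz => (hΩ ▸ hz).2
  have key : ∀ v : ℂ → ℝ, HarmonicOnNhd v Ω → (∀ ξ ∈ frontier Ω \ {0}, Tendsto v (𝓝[Ω] ξ) (𝓝 0)) →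
      (∀ z ∈ Ω, ‖z‖ < δ → |v z| ≤ C * Real.log (1 / ‖z‖)) → ∀ z ∈ Ω, v z ≤ 0 :=
    fun v hv hvb hvg => hv.nonpos_of_le_log hΩo hΩb hΩs
      (fun ξ hξ ε hε => (hvb ξ hξ).eventually (eventually_lt_nhds hε)) hC.le hδ.1
      fun z hz hzδ => (le_abs_self _).trans (hvg z hz hzδ)
  have hharm := hu.harmonicOnNhd hΩo
  intro z hz
  refine le_antisymm (key u hharm hbdry hgr z hz) (neg_nonpos.1 ?_)
  exact key (-u) hharm.neg (fun ξ hξ => neg_zero (G := ℝ) ▸ (hbdry ξ hξ).neg)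
    (fun w hw hwδ => by simpa using hgr w hw hwδ) z hz

end
end

section
/- For every compact set K ⊆ D there exists a constant c > 0 such that I_h(μ) ≥ c for every Borel probability measure μ with support contained in K. In particular W_h(K) > 0, so the h-capacity of every compact subset of D is finite. (Positivity of the Robin-type constant, inequality (2.8).) -/
/-!
On a compact `K ⊆ D` we have `r ≤ |z| ≤ R` with `0 < r` and `R < 1`. The identity
`|1 - z w̄|² = |z - w|² + (1 - |z|²)(1 - |w|²)` together with `|z - w| ≤ 2` bounds `G` below on
`K × K` by `log √(1 + ((1 - R²)/2)²) > 0`, while `h ≤ log (1/r)` on `K`; so the integrand of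
`I_h` is bounded below by a constant `c > 0`, and `I_h(μ) ≥ c μ(K)²`. If moreover the
`h`-potential of `μ` is dominated by `h`, then `I_h(μ) ≤ μ(K)`, whence `μ(K) ≤ c⁻¹`.
-/

open MeasureTheory Filter Set
open scoped ENNReal Topology

noncomputable section

/-- The `h`-energy of a measure: `I_h(μ) = ∬ G(z,w)/(h(z)h(w)) dμ(z) dμ(w)`. -/
def hEnergy (μ : Measure ℂ) : ℝ≥0∞ :=
  ∫⁻ z, ∫⁻ w, greenFn z w / (ENNReal.ofReal (hker z) * ENNReal.ofReal (hker w)) ∂μ ∂μ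

/-- `W_h(K)`: the infimum of `h`-energies of Borel probability measures supported in `K`. -/
def Wh (K : Set ℂ) : ℝ≥0∞ :=
  sInf { e : ℝ≥0∞ | ∃ μ : Measure ℂ, IsProbabilityMeasure μ ∧ μ Kᶜ = 0 ∧ e = hEnergy μ }

theorem ENNReal.le_inv_of_mul_mul_self_le {c m : ℝ≥0∞} (hm : m ≠ ⊤) (h : c * m * m ≤ m) :
    m ≤ c⁻¹ := by
  rcases eq_or_ne m 0 with rfl | hm0
  · exact zero_le
  rw [ENNReal.le_inv_iff_mul_le, mul_comm]
  exact (ENNReal.mul_le_mul_iff_left hm0 hm).1 (by rwa [one_mul])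

theorem MeasureTheory.mul_measure_univ_mul_le_lintegral_lintegral {α : Type*}
    [MeasurableSpace α] {μ : Measure α} {f : α → α → ℝ≥0∞} {c : ℝ≥0∞}
    (hf : ∀ᵐ x ∂μ, ∀ᵐ y ∂μ, c ≤ f x y) :
    c * μ univ * μ univ ≤ ∫⁻ x, ∫⁻ y, f x y ∂μ ∂μ := by
  rw [← lintegral_const]
  refine lintegral_mono_ae (hf.mono fun x hx => ?_)
  rw [← lintegral_const]
  exact lintegral_mono_ae hx

theorem Complex.normSq_one_sub_mul_conj (z w : ℂ) :
    Complex.normSq (1 - z * (starRingEnd ℂ) w) =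
      Complex.normSq (z - w) + (1 - Complex.normSq z) * (1 - Complex.normSq w) := by
  simp only [Complex.normSq_apply, Complex.sub_re, Complex.sub_im, Complex.mul_re,
    Complex.mul_im, Complex.conj_re, Complex.conj_im, Complex.one_re, Complex.one_im]
  ring

theorem one_add_sq_le_div_sq {R : ℝ} {z w : ℂ} (hz : ‖z‖ ≤ R) (hw : ‖w‖ ≤ R) (hR : R < 1)
    (hzw : z ≠ w) :
    1 + ((1 - R ^ 2) / 2) ^ 2 ≤ (‖1 - z * (starRingEnd ℂ) w‖ / ‖z - w‖) ^ 2 := by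
  have hR0 : 0 ≤ R := (norm_nonneg z).trans hz
  have hdist_pos : 0 < ‖z - w‖ := norm_pos_iff.2 (sub_ne_zero.2 hzw)
  have hdist_le : ‖z - w‖ ≤ 2 := (norm_sub_le z w).trans (by linarith)
  have hzR : 1 - R ^ 2 ≤ 1 - ‖z‖ ^ 2 := by nlinarith [norm_nonneg z]
  have hwR : 1 - R ^ 2 ≤ 1 - ‖w‖ ^ 2 := by nlinarith [norm_nonneg w]
  have hident : ‖1 - z * (starRingEnd ℂ) w‖ ^ 2 =
      ‖z - w‖ ^ 2 + (1 - ‖z‖ ^ 2) * (1 - ‖w‖ ^ 2) := by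
    simp only [Complex.sq_norm, Complex.normSq_one_sub_mul_conj]
  have hδ : 0 ≤ 1 - R ^ 2 := by nlinarith
  have hprod : (1 - R ^ 2) ^ 2 ≤ (1 - ‖z‖ ^ 2) * (1 - ‖w‖ ^ 2) := by
    rw [sq]; exact mul_le_mul hzR hwR hδ (hδ.trans hzR)
  rw [div_pow ‖1 - z * (starRingEnd ℂ) w‖, le_div_iff₀ (by positivity), hident]
  nlinarith [sq_nonneg (1 - R ^ 2), mul_le_mul_of_nonneg_left hdist_le hdist_pos.le]

theorem ofReal_log_sqrt_le_greenFn {R : ℝ} {z w : ℂ} (hz : ‖z‖ ≤ R) (hw : ‖w‖ ≤ R)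
    (hR : R < 1) :
    ENNReal.ofReal (Real.log (Real.sqrt (1 + ((1 - R ^ 2) / 2) ^ 2))) ≤ greenFn z w := by
  rw [greenFn]
  split_ifs with hzw
  · exact le_top
  refine ENNReal.ofReal_le_ofReal (Real.log_le_log (Real.sqrt_pos.2 (by positivity)) ?_)
  calc Real.sqrt (1 + ((1 - R ^ 2) / 2) ^ 2)
      ≤ Real.sqrt ((‖1 - z * (starRingEnd ℂ) w‖ / ‖z - w‖) ^ 2) :=
        Real.sqrt_le_sqrt (one_add_sq_le_div_sq hz hw hR hzw)
    _ = ‖1 - z * (starRingEnd ℂ) w‖ / ‖z - w‖ := Real.sqrt_sq (by positivity)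

theorem hker_pos {z : ℂ} (hz : z ∈ puncDisk) : 0 < hker z :=
  Real.log_pos (one_lt_one_div (norm_pos_iff.2 hz.2) hz.1)

theorem hker_le_hker {z w : ℂ} (hw : 0 < ‖w‖) (hwz : ‖w‖ ≤ ‖z‖) : hker z ≤ hker w :=
  Real.log_le_log (one_div_pos.2 (hw.trans_le hwz)) (one_div_le_one_div_of_le hw hwz)

theorem exists_pos_le_greenFn_div_hker_mul_hker {K : Set ℂ} (hK : IsCompact K)
    (hKD : K ⊆ puncDisk) :
    ∃ c : ℝ≥0∞, 0 < c ∧ ∀ z ∈ K, ∀ w ∈ K,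
      c ≤ greenFn z w / (ENNReal.ofReal (hker z) * ENNReal.ofReal (hker w)) := by
  rcases K.eq_empty_or_nonempty with rfl | hne
  · exact ⟨1, one_pos, by simp⟩
  obtain ⟨zR, hzRK, hzR⟩ := hK.exists_isMaxOn hne continuous_norm.continuousOn
  obtain ⟨zr, hzrK, hzr⟩ := hK.exists_isMinOn hne continuous_norm.continuousOn
  set R := ‖zR‖
  have hR : R < 1 := (hKD hzRK).1
  have hzr0 : 0 < ‖zr‖ := norm_pos_iff.2 (hKD hzrK).2
  have hg : 0 < Real.log (Real.sqrt (1 + ((1 - R ^ 2) / 2) ^ 2)) := by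
    have : 0 < 1 - R ^ 2 := by nlinarith [norm_nonneg zR]
    exact Real.log_pos ((Real.lt_sqrt zero_le_one).2 (by nlinarith))
  refine ⟨ENNReal.ofReal (Real.log (Real.sqrt (1 + ((1 - R ^ 2) / 2) ^ 2))) /
      (ENNReal.ofReal (hker zr) * ENNReal.ofReal (hker zr)),
    ENNReal.div_pos (ENNReal.ofReal_pos.2 hg).ne'
      (ENNReal.mul_ne_top ENNReal.ofReal_ne_top ENNReal.ofReal_ne_top),
    fun z hz w hw => ENNReal.div_le_div (ofReal_log_sqrt_le_greenFn (hzR hz) (hzR hw) hR) ?_⟩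
  exact mul_le_mul' (ENNReal.ofReal_le_ofReal (hker_le_hker hzr0 (hzr hz)))
    (ENNReal.ofReal_le_ofReal (hker_le_hker hzr0 (hzr hw)))

theorem lintegral_greenFn_div_hker_mul_hker_le_one {μ : Measure ℂ} {z : ℂ} (hz : z ∈ puncDisk)
    (hpot : hPotential μ z ≤ ENNReal.ofReal (hker z)) :
    ∫⁻ w, greenFn z w / (ENNReal.ofReal (hker z) * ENNReal.ofReal (hker w)) ∂μ ≤ 1 := by
  have hz0 : ENNReal.ofReal (hker z) ≠ 0 := (ENNReal.ofReal_pos.2 (hker_pos hz)).ne'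
  calc ∫⁻ w, greenFn z w / (ENNReal.ofReal (hker z) * ENNReal.ofReal (hker w)) ∂μ
      = (ENNReal.ofReal (hker z))⁻¹ * hPotential μ z := by
        rw [hPotential, ← lintegral_const_mul' _ _ (ENNReal.inv_ne_top.2 hz0)]
        refine lintegral_congr fun w => ?_
        rw [div_eq_mul_inv, div_eq_mul_inv,
          ENNReal.mul_inv (Or.inr ENNReal.ofReal_ne_top) (Or.inl ENNReal.ofReal_ne_top)]
        ring
    _ ≤ (ENNReal.ofReal (hker z))⁻¹ * ENNReal.ofReal (hker z) := mul_le_mul_right hpot _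
    _ = 1 := ENNReal.inv_mul_cancel hz0 ENNReal.ofReal_ne_top

theorem hEnergy_le_measure_univ {μ : Measure ℂ} (hμ : ∀ᵐ z ∂μ, z ∈ puncDisk)
    (hpot : ∀ z ∈ puncDisk, hPotential μ z ≤ ENNReal.ofReal (hker z)) :
    hEnergy μ ≤ μ univ :=
  calc hEnergy μ ≤ ∫⁻ _, 1 ∂μ :=
        lintegral_mono_ae (hμ.mono fun z hz =>
          lintegral_greenFn_div_hker_mul_hker_le_one hz (hpot z hz))
    _ = μ univ := lintegral_one

/-- Positivity of the Robin-type constant (inequality (2.8)): the `h`-energy of probability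
measures on a compact `K ⊆ D` is bounded away from zero; hence `W_h(K) > 0` and the
`h`-capacity of every compact subset of `D` is finite. -/
theorem hEnergy_bounded_below (K : Set ℂ) (hK : IsCompact K) (hKD : K ⊆ puncDisk) :
    (∃ c : ℝ≥0∞, 0 < c ∧
      ∀ μ : Measure ℂ, IsProbabilityMeasure μ → μ Kᶜ = 0 → c ≤ hEnergy μ) ∧
    0 < Wh K ∧ capH K ≠ ⊤ := by
  obtain ⟨c, hc0, hcK⟩ := exists_pos_le_greenFn_div_hker_mul_hker hK hKD
  have hlow : ∀ μ : Measure ℂ, μ Kᶜ = 0 → c * μ univ * μ univ ≤ hEnergy μ := by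
    intro μ h0
    have hKae : ∀ᵐ z ∂μ, z ∈ K := mem_ae_iff.2 h0
    exact mul_measure_univ_mul_le_lintegral_lintegral
      (hKae.mono fun z hz => hKae.mono fun w hw => hcK z hz w hw)
  have hprob : ∀ μ : Measure ℂ, IsProbabilityMeasure μ → μ Kᶜ = 0 → c ≤ hEnergy μ := by
    intro μ _ h0
    simpa using hlow μ h0
  refine ⟨⟨c, hc0, hprob⟩, hc0.trans_le (le_sInf ?_), ?_⟩
  · rintro _ ⟨μ, hμ, h0, rfl⟩
    exact hprob μ hμ h0
  refine ne_top_of_le_ne_top (ENNReal.inv_ne_top.2 hc0.ne') (sSup_le ?_)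
  rintro _ ⟨μ, _, h0, hpot, rfl⟩
  have hKae : ∀ᵐ z ∂μ, z ∈ K := mem_ae_iff.2 h0
  exact (measure_mono (subset_univ K)).trans (ENNReal.le_inv_of_mul_mul_self_le
    (measure_ne_top μ univ) ((hlow μ h0).trans (hEnergy_le_measure_univ (hKae.mono hKD) hpot)))

end
end

section
/- (Lemma 2.2(2) for the Laplacian.) The h-capacity is continuous along monotone sequences of compact sets with compact limit: (a) if (K_n) is a decreasing sequence of compact subsets of D with K = ⋂_n K_n, then lim_{n→∞} C_h(K_n) = C_h(K); (b) if (K_n) is an increasing sequence of compact subsets of D whose union K = ⋃_n K_n is itself a compact subset of D, then lim_{n→∞} C_h(K_n) = C_h(K). -/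
open MeasureTheory Filter Set
open scoped ENNReal Topology

noncomputable section

/-!
For an increasing sequence, an admissible measure for `⋃ Kₙ` restricts to admissible measures for
the `Kₙ` whose masses increase to its mass.

For a decreasing sequence and `r < C_h(Kₙ)` for all `n`, the admissible measures for `Kₙ` of mass
exactly `r` form a decreasing sequence of nonempty weakly compact sets: Prokhorov's theorem on the
compact `Kₙ`, together with lower semicontinuity of the potential, since on measures carried by a
compact `K ⊆ D` the `h`-potential at `z` is the supremum over `k` of the integrals of the bounded
continuous functions `min(G(z,·), k) · φ / h`, where `φ` is a cutoff equal to `1` on `K` with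
support in `D`. A measure in their intersection is admissible for `⋂ Kₙ` and has mass `r`.
-/

open scoped NNReal BoundedContinuousFunction

structure IsHAdmissible (K : Set ℂ) (μ : Measure ℂ) : Prop where
  isFiniteMeasure : IsFiniteMeasure μ
  measure_compl : μ Kᶜ = 0
  hPotential_le : ∀ z ∈ puncDisk, hPotential μ z ≤ ENNReal.ofReal (hker z)

namespace IsHAdmissible

variable {K L : Set ℂ} {μ : Measure ℂ}

lemma mono (hμ : IsHAdmissible K μ) (hKL : K ⊆ L) : IsHAdmissible L μ :=
  ⟨hμ.isFiniteMeasure, measure_mono_null (compl_subset_compl.2 hKL) hμ.measure_compl,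
    hμ.hPotential_le⟩

lemma iInter {ι : Type*} [Countable ι] [Nonempty ι] {K : ι → Set ℂ}
    (hμ : ∀ i, IsHAdmissible (K i) μ) : IsHAdmissible (⋂ i, K i) μ :=
  ⟨(hμ (Classical.arbitrary ι)).isFiniteMeasure,
    by simpa [compl_iInter] using fun i => (hμ i).measure_compl,
    (hμ (Classical.arbitrary ι)).hPotential_le⟩

lemma restrict (hμ : IsHAdmissible K μ) (hL : MeasurableSet L) :
    IsHAdmissible L (μ.restrict L) where
  isFiniteMeasure := by have := hμ.isFiniteMeasure; infer_instance
  measure_compl := by rw [Measure.restrict_apply hL.compl, compl_inter_self, measure_empty]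
  hPotential_le z hz :=
    (lintegral_mono' Measure.restrict_le_self le_rfl).trans (hμ.hPotential_le z hz)

lemma smul (hμ : IsHAdmissible K μ) {c : ℝ≥0} (hc : c ≤ 1) : IsHAdmissible K (c • μ) where
  isFiniteMeasure := by have := hμ.isFiniteMeasure; infer_instance
  measure_compl := by simp [hμ.measure_compl]
  hPotential_le z hz := by
    rw [hPotential, lintegral_smul_measure, ENNReal.smul_def, smul_eq_mul]
    exact (mul_le_of_le_one_left zero_le (by exact_mod_cast hc)).trans (hμ.hPotential_le z hz)

lemma measure_eq_measure_univ (hμ : IsHAdmissible K μ) : μ K = μ univ :=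
  measure_congr (ae_eq_univ.2 hμ.measure_compl)

end IsHAdmissible

lemma le_capH {K : Set ℂ} {μ : Measure ℂ} (hμ : IsHAdmissible K μ) : μ K ≤ capH K :=
  le_sSup ⟨μ, hμ.1, hμ.2, hμ.3, rfl⟩

lemma exists_isHAdmissible_lt_of_lt_capH {K : Set ℂ} {r : ℝ≥0∞} (h : r < capH K) :
    ∃ μ, IsHAdmissible K μ ∧ r < μ K := by
  obtain ⟨_, ⟨μ, hfin, hcompl, hpot, rfl⟩, hr⟩ := lt_sSup_iff.1 h
  exact ⟨μ, ⟨hfin, hcompl, hpot⟩, hr⟩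

lemma monotone_capH : Monotone capH := by
  intro K L hKL
  refine sSup_le ?_
  rintro _ ⟨μ, hfin, hcompl, hpot, rfl⟩
  exact (measure_mono hKL).trans (le_capH (IsHAdmissible.mono ⟨hfin, hcompl, hpot⟩ hKL))

lemma capH_iUnion_of_monotone {K : ℕ → Set ℂ} (hK : ∀ n, MeasurableSet (K n))
    (hmono : Monotone K) :
    capH (⋃ n, K n) = ⨆ n, capH (K n) := by
  refine le_antisymm (sSup_le ?_) (iSup_le fun n => monotone_capH (subset_iUnion K n))
  rintro _ ⟨μ, hfin, hcompl, hpot, rfl⟩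
  rw [hmono.directed_le.measure_iUnion]
  refine iSup_mono fun n => ?_
  simpa [Measure.restrict_apply_self] using
    le_capH (IsHAdmissible.restrict ⟨hfin, hcompl, hpot⟩ (hK n))

lemma exists_finiteMeasure_mass_eq_of_lt_capH {K : Set ℂ} {r : ℝ≥0} (h : (r : ℝ≥0∞) < capH K) :
    ∃ μ : FiniteMeasure ℂ, μ.mass = r ∧ IsHAdmissible K μ := by
  obtain ⟨μ, hμ, hr⟩ := exists_isHAdmissible_lt_of_lt_capH h
  have := hμ.isFiniteMeasure
  set μ' : FiniteMeasure ℂ := ⟨μ, this⟩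
  have hmass : r < μ'.mass := by
    rw [← ENNReal.coe_lt_coe, FiniteMeasure.ennreal_mass]
    exact hr.trans_eq hμ.measure_eq_measure_univ
  refine ⟨(r / μ'.mass) • μ', ?_, ?_⟩
  · rw [FiniteMeasure.mass, FiniteMeasure.smul_apply, smul_eq_mul, ← FiniteMeasure.mass,
      div_mul_cancel₀ _ (pos_of_gt hmass).ne']
  · rw [FiniteMeasure.toMeasure_smul]
    exact hμ.smul (div_le_one_of_le₀ hmass.le zero_le)

lemma isOpen_unitDisk : IsOpen unitDisk := isOpen_lt continuous_norm continuous_const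

lemma isOpen_puncDisk : IsOpen puncDisk := isOpen_unitDisk.sdiff isClosed_singleton

lemma hker_pos_s14 {w : ℂ} (hw : w ∈ puncDisk) : 0 < hker w :=
  Real.log_pos (one_lt_one_div (norm_pos_iff.2 hw.2) hw.1)

lemma continuousAt_hker {w : ℂ} (hw : w ≠ 0) : ContinuousAt hker w :=
  (continuousAt_const.div continuous_norm.continuousAt (norm_ne_zero_iff.2 hw)).log
    (by simpa using hw)

lemma one_sub_mul_conj_ne_zero {z w : ℂ} (hz : ‖z‖ < 1) (hw : ‖w‖ < 1) :
    1 - z * (starRingEnd ℂ) w ≠ 0 := by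
  intro h
  have := congrArg norm (sub_eq_zero.1 h)
  rw [norm_mul, Complex.norm_conj, norm_one] at this
  nlinarith [norm_nonneg z, norm_nonneg w]

lemma continuousAt_greenFn_of_ne {z w : ℂ} (hz : ‖z‖ < 1) (hw : ‖w‖ < 1) (hwz : w ≠ z) :
    ContinuousAt (greenFn z) w := by
  have hden : ‖z - w‖ ≠ 0 := norm_ne_zero_iff.2 (sub_ne_zero.2 hwz.symm)
  have hratio : ContinuousAt (fun w => ‖1 - z * (starRingEnd ℂ) w‖ / ‖z - w‖) w := by fun_prop
  have hpos : ‖1 - z * (starRingEnd ℂ) w‖ / ‖z - w‖ ≠ 0 :=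
    div_ne_zero (norm_ne_zero_iff.2 (one_sub_mul_conj_ne_zero hz hw)) hden
  refine (ENNReal.continuous_ofReal.continuousAt.comp (hratio.log hpos)).congr ?_
  filter_upwards [isOpen_ne.mem_nhds hwz] with v hv
  simp [greenFn, Ne.symm hv]

lemma tendsto_greenFn_nhdsNE {z : ℂ} (hz : ‖z‖ < 1) : Tendsto (greenFn z) (𝓝[≠] z) (𝓝 ⊤) := by
  have hnum : Tendsto (fun w => ‖1 - z * (starRingEnd ℂ) w‖) (𝓝[≠] z)
      (𝓝 ‖1 - z * (starRingEnd ℂ) z‖) :=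
    (Continuous.tendsto (by fun_prop) z).mono_left nhdsWithin_le_nhds
  have hden : Tendsto (fun w => ‖z - w‖) (𝓝[≠] z) (𝓝[>] 0) := by
    refine tendsto_nhdsWithin_iff.2 ⟨?_, ?_⟩
    · simpa using (Continuous.tendsto (by fun_prop : Continuous fun w => ‖z - w‖) z).mono_left
        nhdsWithin_le_nhds
    · filter_upwards [self_mem_nhdsWithin] with w hw
      exact norm_pos_iff.2 (sub_ne_zero.2 (Ne.symm hw))
  have hratio : Tendsto (fun w => ‖1 - z * (starRingEnd ℂ) w‖ * ‖z - w‖⁻¹) (𝓝[≠] z) atTop :=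
    hnum.pos_mul_atTop (norm_pos_iff.2 (one_sub_mul_conj_ne_zero hz hz))
      (tendsto_inv_nhdsGT_zero.comp hden)
  refine (ENNReal.tendsto_ofReal_atTop.comp (Real.tendsto_log_atTop.comp hratio)).congr' ?_
  filter_upwards [self_mem_nhdsWithin] with w hw
  simp [greenFn, Ne.symm hw, div_eq_mul_inv]

lemma continuousOn_greenFn {z : ℂ} (hz : ‖z‖ < 1) : ContinuousOn (greenFn z) unitDisk := by
  intro w hw
  refine ContinuousAt.continuousWithinAt ?_
  rcases eq_or_ne w z with rfl | hwz
  · rw [← continuousWithinAt_compl_self, ContinuousWithinAt, greenFn, if_pos rfl]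
    exact tendsto_greenFn_nhdsNE hz
  · exact continuousAt_greenFn_of_ne hz hw hwz

lemma iSup_min_natCast (a : ℝ≥0∞) : ⨆ k : ℕ, min a (k : ℝ≥0∞) = a := by
  rw [← inf_iSup_eq, ENNReal.iSup_natCast, inf_top_eq]

lemma min_natCast_ne_top (a : ℝ≥0∞) (k : ℕ) : min a k ≠ ⊤ :=
  (min_lt_of_right_lt (ENNReal.natCast_lt_top k)).ne

def greenQuotTrunc (z : ℂ) (φ : ℂ → ℝ) (k : ℕ) (w : ℂ) : ℝ≥0 :=
  (min (greenFn z w) k).toNNReal * (φ w / hker w).toNNReal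

section greenQuotTrunc

variable {z : ℂ} {φ : ℂ → ℝ}

lemma support_greenQuotTrunc_subset (k : ℕ) :
    Function.support (greenQuotTrunc z φ k) ⊆ Function.support φ :=
  fun w hw h0 => hw (by simp [greenQuotTrunc, show φ w = 0 from h0])

lemma continuous_greenQuotTrunc (hz : z ∈ unitDisk) (hφ : Continuous φ)
    (hφD : tsupport φ ⊆ puncDisk) (k : ℕ) : Continuous (greenQuotTrunc z φ k) := by
  refine continuous_of_tsupport fun w hw => ?_
  have hwD : w ∈ puncDisk := hφD (closure_mono (support_greenQuotTrunc_subset k) hw)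
  have hmin : ContinuousAt (fun v => min (greenFn z v) k) w :=
    ((continuousOn_greenFn hz).continuousAt (isOpen_unitDisk.mem_nhds hwD.1)).min
      continuousAt_const
  have hquot : ContinuousAt (fun v => φ v / hker v) w :=
    hφ.continuousAt.div (continuousAt_hker hwD.2) (hker_pos_s14 hwD).ne'
  exact ((ENNReal.tendsto_toNNReal (min_natCast_ne_top _ k)).comp hmin).mul
    (continuous_real_toNNReal.continuousAt.comp hquot)

lemma monotone_greenQuotTrunc : Monotone (greenQuotTrunc z φ) := fun _ l hkl _ =>
  mul_le_mul_left (ENNReal.toNNReal_mono (min_natCast_ne_top _ l)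
    (min_le_min_left _ (Nat.cast_le.2 hkl))) _

lemma iSup_greenQuotTrunc {w : ℂ} (hw : w ∈ puncDisk) (hφw : φ w = 1) :
    ⨆ k, (greenQuotTrunc z φ k w : ℝ≥0∞) = greenFn z w / ENNReal.ofReal (hker w) := by
  simp only [greenQuotTrunc, hφw, ENNReal.coe_mul, ENNReal.coe_toNNReal (min_natCast_ne_top _ _)]
  rw [← ENNReal.iSup_mul, iSup_min_natCast, div_eq_mul_inv, div_eq_mul_inv, one_mul,
    ← ENNReal.ofReal_inv_of_pos (hker_pos_s14 hw)]
  rfl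

lemma hPotential_eq_iSup_lintegral_greenQuotTrunc {K : Set ℂ} {μ : Measure ℂ} (hz : z ∈ unitDisk)
    (hφ : Continuous φ) (hφD : tsupport φ ⊆ puncDisk) (hφK : EqOn φ 1 K) (hKD : K ⊆ puncDisk)
    (hμ : μ Kᶜ = 0) :
    hPotential μ z = ⨆ k, ∫⁻ w, greenQuotTrunc z φ k w ∂μ := by
  rw [← lintegral_iSup
    (fun k => (continuous_greenQuotTrunc hz hφ hφD k).measurable.coe_nnreal_ennreal)
    (fun _ _ hkl w => ENNReal.coe_le_coe.2 (monotone_greenQuotTrunc hkl w))]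
  refine lintegral_congr_ae ?_
  filter_upwards [mem_ae_iff.2 hμ] with w hw
  exact (iSup_greenQuotTrunc (hKD hw) (hφK hw)).symm

end greenQuotTrunc

lemma exists_boundedContinuous_hPotential_eq_iSup {K : Set ℂ} (hK : IsCompact K)
    (hKD : K ⊆ puncDisk) {z : ℂ} (hz : z ∈ unitDisk) :
    ∃ f : ℕ → ℂ →ᵇ ℝ≥0, ∀ μ : Measure ℂ, μ Kᶜ = 0 → hPotential μ z = ⨆ k, ∫⁻ w, f k w ∂μ := by
  obtain ⟨φ, hφK, hφc, hφD, -⟩ :=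
    exists_continuousMap_one_of_isCompact_subset_isOpen hK isOpen_puncDisk hKD
  exact ⟨fun k => CompactlySupportedContinuousMap.toBoundedContinuousFunction
    ⟨⟨greenQuotTrunc z φ k, continuous_greenQuotTrunc hz φ.continuous hφD k⟩,
      HasCompactSupport.mono' hφc (subset_closure.trans' (support_greenQuotTrunc_subset k))⟩,
    fun μ hμ => hPotential_eq_iSup_lintegral_greenQuotTrunc hz φ.continuous hφD hφK hKD hμ⟩

lemma MeasureTheory.FiniteMeasure.isClosed_setOf_lintegral_le {Ω : Type*} [MeasurableSpace Ω]
    [TopologicalSpace Ω] [OpensMeasurableSpace Ω] (f : Ω →ᵇ ℝ≥0) (c : ℝ≥0∞) :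
    IsClosed {μ : FiniteMeasure Ω | ∫⁻ x, f x ∂μ ≤ c} := by
  simp_rw [← FiniteMeasure.testAgainstNN_coe_eq]
  exact isClosed_le (ENNReal.continuous_coe.comp (FiniteMeasure.continuous_testAgainstNN_eval f))
    continuous_const

lemma isCompact_setOf_mass_eq_isHAdmissible {K : Set ℂ} (hK : IsCompact K) (hKD : K ⊆ puncDisk)
    (C : ℝ≥0) : IsCompact {μ : FiniteMeasure ℂ | μ.mass = C ∧ IsHAdmissible K μ} := by
  choose f hf using fun z : puncDisk => exists_boundedContinuous_hPotential_eq_iSup hK hKD z.2.1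
  have hclosed : IsClosed ({μ : FiniteMeasure ℂ | μ.mass = C} ∩
      ⋂ (z : puncDisk) (k : ℕ), {μ | ∫⁻ w, f z k w ∂μ ≤ ENNReal.ofReal (hker z)}) :=
    (isClosed_eq FiniteMeasure.continuous_mass continuous_const).inter <|
      isClosed_iInter fun z => isClosed_iInter fun k =>
        FiniteMeasure.isClosed_setOf_lintegral_le _ _
  convert (isCompact_setOfPred_finiteMeasure_le_of_isCompact C hK).inter_right hclosed using 1
  ext μ
  simp only [mem_ofPred_eq, mem_inter_iff, mem_iInter, FiniteMeasure.null_iff_toMeasure_null]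
  constructor
  · rintro ⟨hmass, hμ⟩
    refine ⟨⟨hmass.le, hμ.measure_compl⟩, hmass, fun z => ?_⟩
    exact iSup_le_iff.1 ((hf z μ hμ.measure_compl).symm.trans_le (hμ.hPotential_le z z.2))
  · rintro ⟨⟨-, hcompl⟩, hmass, hpot⟩
    refine ⟨hmass, inferInstance, hcompl, fun z hz => ?_⟩
    exact (hf ⟨z, hz⟩ μ hcompl).trans_le (iSup_le (hpot ⟨z, hz⟩))

lemma capH_iInter_of_antitone {K : ℕ → Set ℂ} (hK : ∀ n, IsCompact (K n))
    (hKD : ∀ n, K n ⊆ puncDisk) (hanti : Antitone K) :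
    capH (⋂ n, K n) = ⨅ n, capH (K n) := by
  refine le_antisymm (le_iInf fun n => monotone_capH (iInter_subset K n))
    (ENNReal.le_of_forall_nnreal_lt fun r hr => ?_)
  set T : ℕ → Set (FiniteMeasure ℂ) := fun n => {μ | μ.mass = r ∧ IsHAdmissible (K n) μ}
  have hT : ∀ n, IsCompact (T n) := fun n => isCompact_setOf_mass_eq_isHAdmissible (hK n) (hKD n) r
  obtain ⟨μ, hμ⟩ := (hT 0).nonempty_iInter_of_sequence_nonempty_isCompact_isClosed T
    (fun n _ hμ => ⟨hμ.1, hμ.2.mono (hanti n.le_succ)⟩)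
    (fun n => exists_finiteMeasure_mass_eq_of_lt_capH (hr.trans_le (iInf_le _ n)))
    (fun n => (hT n).isClosed)
  have hμK : IsHAdmissible (⋂ n, K n) μ := IsHAdmissible.iInter fun n => (mem_iInter.1 hμ n).2
  calc (r : ℝ≥0∞) = (μ : Measure ℂ) univ := by
        rw [← FiniteMeasure.ennreal_mass, (mem_iInter.1 hμ 0).1]
    _ = (μ : Measure ℂ) (⋂ n, K n) := hμK.measure_eq_measure_univ.symm
    _ ≤ capH (⋂ n, K n) := le_capH hμK

/-- Lemma 2.2(2) for the Laplacian: the `h`-capacity is continuous along monotone sequences of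
compact subsets of `D` with compact limit. -/
theorem capH_continuous_along_monotone_sequences :
    (∀ K : ℕ → Set ℂ, (∀ n, IsCompact (K n)) → (∀ n, K n ⊆ puncDisk) →
      (∀ n, K (n + 1) ⊆ K n) →
      Tendsto (fun n => capH (K n)) atTop (𝓝 (capH (⋂ n, K n)))) ∧
    (∀ K : ℕ → Set ℂ, (∀ n, IsCompact (K n)) → (∀ n, K n ⊆ K (n + 1)) →
      IsCompact (⋃ n, K n) → (⋃ n, K n) ⊆ puncDisk →
      Tendsto (fun n => capH (K n)) atTop (𝓝 (capH (⋃ n, K n)))) := by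
  refine ⟨fun K hK hKD hdec => ?_, fun K hK hinc _ _ => ?_⟩
  · have hanti : Antitone K := antitone_nat_of_succ_le hdec
    rw [capH_iInter_of_antitone hK hKD hanti]
    exact tendsto_atTop_iInf (monotone_capH.comp_antitone hanti)
  · have hmono : Monotone K := monotone_nat_of_le_succ hinc
    rw [capH_iUnion_of_monotone (fun n => (hK n).measurableSet) hmono]
    exact tendsto_atTop_iSup (monotone_capH.comp hmono)

end
end
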